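/- arXiv:2005.00480 — 3 statements merged into one kernel-verified Lean document; each statement's English description precedes it below -/
import Mathlib

section
/- RotatE-Box models symmetry: Let c : Fin k → ℂ satisfy (c j)^2 = 1 for every index j. Then for all entities e1, e2, the point e2 is inside the query box of e1 and the zero-offset box (c, 0) if and only if e1 is inside the query box of e2 and (c, 0). -/
/-- A point `v` is inside the box with center `c` and offset `o`. -/
def insideBox {k : ℕ} (c o v : Fin k → ℂ) : Prop :=
  ∀ j, (c j).re - (o j).re ≤ (v j).re ∧ (v j).re ≤ (c j).re + (o j).re ∧
       (c j).im - (o j).im ≤ (v j).im ∧ (v j).im ≤ (c j).im + (o j).im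

/-- Componentwise (Hadamard) product. -/
def hadamard {k : ℕ} (u w : Fin k → ℂ) : Fin k → ℂ := fun j => u j * w j

lemma insideBox_zero_iff {k : ℕ} (c v : Fin k → ℂ) :
    insideBox c 0 v ↔ ∀ j, v j = c j := by
  unfold insideBox
  constructor
  · intro h j
    obtain ⟨h1, h2, h3, h4⟩ := h j
    simp only [Pi.zero_apply, Complex.zero_re, Complex.zero_im, sub_zero, add_zero] at *
    exact Complex.ext (le_antisymm h2 h1) (le_antisymm h4 h3)
  · intro h j
    simp [h j]

theorem rotate_box_models_symmetry {k : ℕ} (c : Fin k → ℂ)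
    (hc : ∀ j, (c j) ^ 2 = 1) (e1 e2 : Fin k → ℂ) :
    insideBox (hadamard e1 c) 0 e2 ↔ insideBox (hadamard e2 c) 0 e1 := by
  simp only [insideBox_zero_iff, hadamard]
  constructor <;> intro h j <;> rw [h j] <;>
    rw [mul_assoc, ← sq, hc j, mul_one]
end

section
/- RotatE-Box models antisymmetry: Let c : Fin k → ℂ satisfy ‖c j‖ = 1 for every index j, and suppose there is an index j0 with e1 j0 ≠ 0 and (c j0)^2 ≠ 1. Then it is not the case that both e2 is inside the query box of e1 and the zero-offset box (c, 0) and e1 is inside the query box of e2 and (c, 0). -/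
theorem rotate_box_models_antisymmetry {k : ℕ} (c : Fin k → ℂ)
    (hc : ∀ j, ‖c j‖ = 1) (e1 e2 : Fin k → ℂ) (j0 : Fin k)
    (he1 : e1 j0 ≠ 0) (hcj0 : (c j0) ^ 2 ≠ 1) :
    ¬ (insideBox (hadamard e1 c) 0 e2 ∧ insideBox (hadamard e2 c) 0 e1) := by
  rintro ⟨h1, h2⟩
  obtain ⟨a1, a2, a3, a4⟩ := h1 j0
  obtain ⟨b1, b2, b3, b4⟩ := h2 j0
  simp only [hadamard, Pi.zero_apply, Complex.zero_re, Complex.zero_im, sub_zero,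
    add_zero] at a1 a2 a3 a4 b1 b2 b3 b4
  have he2 : e2 j0 = e1 j0 * c j0 := (Complex.ext (le_antisymm a2 a1) (le_antisymm a4 a3))
  have he1' : e1 j0 = e2 j0 * c j0 := (Complex.ext (le_antisymm b2 b1) (le_antisymm b4 b3))
  apply hcj0
  have : e1 j0 * c j0 ^ 2 = e1 j0 * 1 := by
    rw [mul_one, sq, ← mul_assoc, ← he2, ← he1']
  exact mul_left_cancel₀ he1 this
end

section
/- Incompatibility of exact KBC and Kleene-plus modeling in distance-based embeddings: Let c : Fin k → ℂ and let e1, e2, e3 be entities with e2 = e1 ⊙ c and e3 = e2 ⊙ c (exact modeling of the chain of single-hop facts). Suppose there exist a box q' = (c', o') and a constant α > 0 such that dist(e2; q') = 0 and dist(e3; q') = 0 (both answers of the Kleene-plus query score perfectly). Then e2 = e3, and consequently c j = 1 for every index j with e2 j ≠ 0. -/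
/-- Distance from point `v` to the outside of the box `(c, o)`. -/
noncomputable def distOut {k : ℕ} (c o v : Fin k → ℂ) : ℝ :=
  (∑ j, (max ((v j).re - ((c + o) j).re) 0 + max (((c - o) j).re - (v j).re) 0)) +
  (∑ j, (max ((v j).im - ((c + o) j).im) 0 + max (((c - o) j).im - (v j).im) 0))

/-- clamp(x, a, b) = min(b, max(a, x)). -/
noncomputable def clamp (x a b : ℝ) : ℝ := min b (max a x)

/-- Distance from point `v` to the center, inside the box `(c, o)`. -/
noncomputable def distIn {k : ℕ} (c o v : Fin k → ℂ) : ℝ :=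
  (∑ j, |(c j).re - clamp ((v j).re) (((c - o) j).re) (((c + o) j).re)|) +
  (∑ j, |(c j).im - clamp ((v j).im) (((c - o) j).im) (((c + o) j).im)|)

/-- Full distance from point `v` to the box `(c, o)` with inside-weight `α`. -/
noncomputable def distBox {k : ℕ} (α : ℝ) (c o v : Fin k → ℂ) : ℝ :=
  distOut c o v + α * distIn c o v

lemma term_nonneg (a b : ℝ) : 0 ≤ max a 0 + max b 0 := by positivity

lemma distOut_nonneg {k : ℕ} (c o v : Fin k → ℂ) : 0 ≤ distOut c o v := by
  unfold distOut
  have h1 : (0:ℝ) ≤ ∑ j, (max ((v j).re - ((c + o) j).re) 0 + max (((c - o) j).re - (v j).re) 0) :=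
    Finset.sum_nonneg fun j _ => term_nonneg _ _
  have h2 : (0:ℝ) ≤ ∑ j, (max ((v j).im - ((c + o) j).im) 0 + max (((c - o) j).im - (v j).im) 0) :=
    Finset.sum_nonneg fun j _ => term_nonneg _ _
  linarith

lemma distIn_nonneg {k : ℕ} (c o v : Fin k → ℂ) : 0 ≤ distIn c o v := by
  unfold distIn
  have h1 : (0:ℝ) ≤ ∑ j, |(c j).re - clamp ((v j).re) (((c - o) j).re) (((c + o) j).re)| :=
    Finset.sum_nonneg fun j _ => abs_nonneg _
  have h2 : (0:ℝ) ≤ ∑ j, |(c j).im - clamp ((v j).im) (((c - o) j).im) (((c + o) j).im)| :=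
    Finset.sum_nonneg fun j _ => abs_nonneg _
  linarith

/-- If the full distance is zero, the point equals the center. -/
lemma distBox_eq_zero_imp {k : ℕ} {α : ℝ} (hα : 0 < α) {c o v : Fin k → ℂ}
    (h : distBox α c o v = 0) : v = c := by
  have hout : distOut c o v = 0 := by
    have := distOut_nonneg c o v
    have := distIn_nonneg c o v
    unfold distBox at h
    nlinarith
  have hin : distIn c o v = 0 := by
    have := distOut_nonneg c o v
    have := distIn_nonneg c o v
    unfold distBox at h
    nlinarith
  unfold distOut at hout
  unfold distIn at hin
  have hre1 : ∀ j : Fin k, (max ((v j).re - ((c + o) j).re) 0 + max (((c - o) j).re - (v j).re) 0) = 0 := by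
    have hs1 : (∑ j, (max ((v j).re - ((c + o) j).re) 0 + max (((c - o) j).re - (v j).re) 0)) = 0 := by
      have h1 : (0:ℝ) ≤ ∑ j, (max ((v j).re - ((c + o) j).re) 0 + max (((c - o) j).re - (v j).re) 0) :=
        Finset.sum_nonneg fun j _ => term_nonneg _ _
      have h2 : (0:ℝ) ≤ ∑ j, (max ((v j).im - ((c + o) j).im) 0 + max (((c - o) j).im - (v j).im) 0) :=
        Finset.sum_nonneg fun j _ => term_nonneg _ _
      linarith
    intro j
    exact (Finset.sum_eq_zero_iff_of_nonneg (fun j _ => term_nonneg _ _)).mp hs1 j (Finset.mem_univ j)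
  have him1 : ∀ j : Fin k, (max ((v j).im - ((c + o) j).im) 0 + max (((c - o) j).im - (v j).im) 0) = 0 := by
    have hs1 : (∑ j, (max ((v j).im - ((c + o) j).im) 0 + max (((c - o) j).im - (v j).im) 0)) = 0 := by
      have h1 : (0:ℝ) ≤ ∑ j, (max ((v j).re - ((c + o) j).re) 0 + max (((c - o) j).re - (v j).re) 0) :=
        Finset.sum_nonneg fun j _ => term_nonneg _ _
      have h2 : (0:ℝ) ≤ ∑ j, (max ((v j).im - ((c + o) j).im) 0 + max (((c - o) j).im - (v j).im) 0) :=
        Finset.sum_nonneg fun j _ => term_nonneg _ _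
      linarith
    intro j
    exact (Finset.sum_eq_zero_iff_of_nonneg (fun j _ => term_nonneg _ _)).mp hs1 j (Finset.mem_univ j)
  have hre2 : ∀ j : Fin k, |(c j).re - clamp ((v j).re) (((c - o) j).re) (((c + o) j).re)| = 0 := by
    have hs : (∑ j, |(c j).re - clamp ((v j).re) (((c - o) j).re) (((c + o) j).re)|) = 0 := by
      have h1 : (0:ℝ) ≤ ∑ j, |(c j).re - clamp ((v j).re) (((c - o) j).re) (((c + o) j).re)| :=
        Finset.sum_nonneg fun j _ => abs_nonneg _
      have h2 : (0:ℝ) ≤ ∑ j, |(c j).im - clamp ((v j).im) (((c - o) j).im) (((c + o) j).im)| :=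
        Finset.sum_nonneg fun j _ => abs_nonneg _
      linarith
    intro j
    exact (Finset.sum_eq_zero_iff_of_nonneg (fun j _ => abs_nonneg _)).mp hs j (Finset.mem_univ j)
  have him2 : ∀ j : Fin k, |(c j).im - clamp ((v j).im) (((c - o) j).im) (((c + o) j).im)| = 0 := by
    have hs : (∑ j, |(c j).im - clamp ((v j).im) (((c - o) j).im) (((c + o) j).im)|) = 0 := by
      have h1 : (0:ℝ) ≤ ∑ j, |(c j).re - clamp ((v j).re) (((c - o) j).re) (((c + o) j).re)| :=
        Finset.sum_nonneg fun j _ => abs_nonneg _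
      have h2 : (0:ℝ) ≤ ∑ j, |(c j).im - clamp ((v j).im) (((c - o) j).im) (((c + o) j).im)| :=
        Finset.sum_nonneg fun j _ => abs_nonneg _
      linarith
    intro j
    exact (Finset.sum_eq_zero_iff_of_nonneg (fun j _ => abs_nonneg _)).mp hs j (Finset.mem_univ j)
  funext j
  apply Complex.ext
  · have ha := hre1 j
    have hb := hre2 j
    have hmax1 : max ((v j).re - ((c + o) j).re) 0 = 0 ∧ max (((c - o) j).re - (v j).re) 0 = 0 := by
      constructor <;> nlinarith [le_max_right ((v j).re - ((c + o) j).re) (0:ℝ),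
        le_max_right (((c - o) j).re - (v j).re) (0:ℝ)]
    have hle1 : (v j).re ≤ ((c + o) j).re := by
      have := hmax1.1; by_contra hc; push_neg at hc
      have : max ((v j).re - ((c + o) j).re) 0 = (v j).re - ((c + o) j).re :=
        max_eq_left (by linarith)
      linarith [hmax1.1 ▸ this]
    have hle2 : ((c - o) j).re ≤ (v j).re := by
      by_contra hc; push_neg at hc
      have : max (((c - o) j).re - (v j).re) 0 = ((c - o) j).re - (v j).re :=
        max_eq_left (by linarith)
      linarith [hmax1.2 ▸ this]
    have hclamp : clamp ((v j).re) (((c - o) j).re) (((c + o) j).re) = (v j).re := by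
      unfold clamp
      rw [max_eq_right hle2, min_eq_right hle1]
    rw [hclamp] at hb
    have := abs_eq_zero.mp hb
    linarith
  · have ha := him1 j
    have hb := him2 j
    have hmax1 : max ((v j).im - ((c + o) j).im) 0 = 0 ∧ max (((c - o) j).im - (v j).im) 0 = 0 := by
      constructor <;> nlinarith [le_max_right ((v j).im - ((c + o) j).im) (0:ℝ),
        le_max_right (((c - o) j).im - (v j).im) (0:ℝ)]
    have hle1 : (v j).im ≤ ((c + o) j).im := by
      by_contra hc; push_neg at hc
      have : max ((v j).im - ((c + o) j).im) 0 = (v j).im - ((c + o) j).im :=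
        max_eq_left (by linarith)
      linarith [hmax1.1 ▸ this]
    have hle2 : ((c - o) j).im ≤ (v j).im := by
      by_contra hc; push_neg at hc
      have : max (((c - o) j).im - (v j).im) 0 = ((c - o) j).im - (v j).im :=
        max_eq_left (by linarith)
      linarith [hmax1.2 ▸ this]
    have hclamp : clamp ((v j).im) (((c - o) j).im) (((c + o) j).im) = (v j).im := by
      unfold clamp
      rw [max_eq_right hle2, min_eq_right hle1]
    rw [hclamp] at hb
    have := abs_eq_zero.mp hb
    linarith

theorem kbc_kleene_plus_incompatibility {k : ℕ} (c e1 e2 e3 : Fin k → ℂ)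
    (h2 : e2 = hadamard e1 c) (h3 : e3 = hadamard e2 c)
    (c' o' : Fin k → ℂ) (α : ℝ) (hα : 0 < α)
    (hd2 : distBox α c' o' e2 = 0) (hd3 : distBox α c' o' e3 = 0) :
    e2 = e3 ∧ ∀ j, e2 j ≠ 0 → c j = 1 := by
  have he2 : e2 = c' := distBox_eq_zero_imp hα hd2
  have he3 : e3 = c' := distBox_eq_zero_imp hα hd3
  have heq : e2 = e3 := he2.trans he3.symm
  refine ⟨heq, fun j hj => ?_⟩
  have : e2 j = e2 j * c j := by
    conv_lhs => rw [heq, h3]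
    rfl
  have h1 : e2 j * c j = e2 j * 1 := by rw [mul_one]; exact this.symm
  exact mul_left_cancel₀ hj h1
end
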